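/- arXiv:2303.04434 — 2 statements merged into one kernel-verified Lean document; each statement's English description precedes it below -/
import Mathlib

section
/- With α_r = (1 + a⁴/5)/(2(1−a²)) one has f_d(u, α_r, β₀(α_r)) + f_d(0, α_r, β₀(α_r)) ≥ 0 for all u ∈ [−1,1]. -/
/-!
Both horizontal coordinates of the diagonal point `p(u,u)` equal `a u X` with
`X = (1+u²)/2 + α(1-u²)`, and for `β = β₀(α)` its height simplifies to
`s u² (1 + 2α(1-u²)) + (1+2α) t (1-u²)²/2`, where `s = √(1-2a²)` and `t = √(1-a²)`.
Multiplying `f_d(u) + f_d(0)` by `(1-a²)²` clears the denominator of `α_r`; the result involves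
`s` and `t` only through `s² = 1-2a²`, `t² = 1-a²` and `st`, the last with a nonnegative
coefficient. The bound `st ≥ 1 - 3a²/2 - a⁴`, exact at `a = 0` and at `a² = 1/2`, then leaves
`a⁴ P(1-2a², 1-u²)` up to a positive factor, where the polynomial `P = diagPoly` is nonnegative
on the unit square.
-/

noncomputable section

open Real Set

/-- A vector in Euclidean 3-space. -/
def v3 (x y z : ℝ) : EuclideanSpace ℝ (Fin 3) := !₂[x, y, z]

/-- Quadratic Bernstein polynomials (parametrized on `[-1,1]`). -/
def bern (i : Fin 3) (u : ℝ) : ℝ :=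
  (Nat.choose 2 (i : ℕ)) * ((1 + u) / 2) ^ (i : ℕ) * ((1 - u) / 2) ^ (2 - (i : ℕ))

/-- Control points `ctrl a α β i j = b i j` of the tensor product quadratic Bézier patch:
`b₀₀ = (-a,-a,√(1-2a²))`, `b₂₀ = (a,-a,√(1-2a²))`, `b₀₂ = (-a,a,√(1-2a²))`,
`b₂₂ = (a,a,√(1-2a²))`, `b₁₀ = α(b₀₀+b₂₀)`, `b₀₁ = α(b₀₀+b₀₂)`, `b₂₁ = α(b₂₀+b₂₂)`,
`b₁₂ = α(b₀₂+b₂₂)`, `b₁₁ = β(0,0,1)`. The first index is the `u`-index. -/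
def ctrl (a α β : ℝ) : Fin 3 → Fin 3 → EuclideanSpace ℝ (Fin 3) :=
  ![![v3 (-a) (-a) (Real.sqrt (1 - 2*a^2)),
     α • (v3 (-a) (-a) (Real.sqrt (1 - 2*a^2)) + v3 (-a) a (Real.sqrt (1 - 2*a^2))),
     v3 (-a) a (Real.sqrt (1 - 2*a^2))],
    ![α • (v3 (-a) (-a) (Real.sqrt (1 - 2*a^2)) + v3 a (-a) (Real.sqrt (1 - 2*a^2))),
     β • v3 0 0 1,
     α • (v3 (-a) a (Real.sqrt (1 - 2*a^2)) + v3 a a (Real.sqrt (1 - 2*a^2)))],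
    ![v3 a (-a) (Real.sqrt (1 - 2*a^2)),
     α • (v3 a (-a) (Real.sqrt (1 - 2*a^2)) + v3 a a (Real.sqrt (1 - 2*a^2))),
     v3 a a (Real.sqrt (1 - 2*a^2))]]

/-- The tensor product quadratic Bézier patch
`p(u,v) = ∑ᵢ ∑ⱼ Bᵢ²(u) Bⱼ²(v) bᵢⱼ`. -/
def bez (a α β u v : ℝ) : EuclideanSpace ℝ (Fin 3) :=
  ∑ i : Fin 3, ∑ j : Fin 3, (bern i u * bern j v) • ctrl a α β i j

/-- The simplified radial error `f(u,v,α,β) = ‖p(u,v)‖² - 1`. -/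
def f (a α β u v : ℝ) : ℝ := ‖bez a α β u v‖ ^ 2 - 1

/-- `f_s(u,α) = f(u,-1,α,β)`; this does not depend on `β` (the control point `b₁₁`
does not contribute on the side `v = -1`), so we take `β = 0`. -/
def fs (a α u : ℝ) : ℝ := f a α 0 u (-1)

/-- `f_d(u,α,β) = f(u,u,α,β)`, the error along the diagonal. -/
def fd (a α β u : ℝ) : ℝ := f a α β u u

/-- `β₀(α) = 2(1+2α)√(1-a²) - (1+4α)√(1-2a²)`. -/
def β₀ (a α : ℝ) : ℝ := 2*(1 + 2*α)*Real.sqrt (1 - a^2) - (1 + 4*α)*Real.sqrt (1 - 2*a^2)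

theorem bez_apply (a α β u v : ℝ) (k : Fin 3) :
    bez a α β u v k = ∑ i : Fin 3, ∑ j : Fin 3, (bern i u * bern j v) * ctrl a α β i j k := by
  simp [bez]

theorem fd_eq (a α β u : ℝ) :
    fd a α β u = 2 * (a * u * ((1 + u^2) / 2 + α * (1 - u^2)))^2
      + (√(1 - 2*a^2) * (((1 + u^2) / 2)^2 + 4 * α * ((1 + u^2) / 2) * ((1 - u^2) / 2))
        + β * ((1 - u^2) / 2)^2)^2 - 1 := by
  rw [fd, f, EuclideanSpace.real_norm_sq_eq]
  simp only [bez_apply, Fin.sum_univ_three, ctrl, bern, v3]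
  norm_num [Matrix.cons_val_zero, Matrix.cons_val_one, Matrix.cons_val_two, Matrix.head_cons,
    Matrix.tail_cons]
  ring

def diagErr (a s t α u : ℝ) : ℝ :=
  2 * (a * u * ((1 + u^2) / 2 + α * (1 - u^2)))^2
    + (s * u^2 * (1 + 2 * α * (1 - u^2)) + (1 + 2 * α) * t * (1 - u^2)^2 / 2)^2 - 1

theorem fd_β₀_eq (a α u : ℝ) :
    fd a α (β₀ a α) u = diagErr a √(1 - 2*a^2) √(1 - a^2) α u := by
  rw [fd_eq, diagErr, β₀]
  ring

theorem le_sqrt_one_sub_two_mul_mul_sqrt_one_sub {x : ℝ} (hx0 : 0 ≤ x) (hx : x ≤ 1/2) :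
    1 - 3/2 * x - x^2 ≤ √(1 - 2*x) * √(1 - x) := by
  rw [← Real.sqrt_mul (by linarith)]
  apply Real.le_sqrt_of_sq_le
  have hgap : (1 - 2*x) * (1 - x) - (1 - 3/2 * x - x^2)^2 = x^2 * (1/2 - x) * (7/2 + x) := by
    ring
  rw [← sub_nonneg, hgap]
  exact mul_nonneg (mul_nonneg (sq_nonneg x) (by linarith)) (by linarith)

def diagPoly (r e : ℝ) : ℝ :=
  (161 + 80*e - 638*e^2 - 242*e^3 + 961*e^4)
    + r * ((179 + 160*e - 378*e^2 + 397*e^4)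
      + r * (19 + 80*e - 330*e^2 + 244*e^3 + 25*e^4)
      + r^2 * (1 - 14*e^2 + 15*e^4)
      + r^3 * (-2*e^3 + 2*e^4))

theorem diagPoly_nonneg {r e : ℝ} (hr0 : 0 ≤ r) (hr1 : r ≤ 1) (he0 : 0 ≤ e) (he1 : e ≤ 1) :
    0 ≤ diagPoly r e := by
  have hc₀ : 0 ≤ 161 + 80*e - 638*e^2 - 242*e^3 + 961*e^4 := by
    nlinarith [sq_nonneg (e^2 - 1/2), sq_nonneg (e - 2/3), mul_nonneg he0 (sub_nonneg.2 he1)]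
  have hc₂ : 0 ≤ 19 + 80*e - 330*e^2 + 244*e^3 + 25*e^4 := by
    nlinarith [sq_nonneg (e - 2/3), mul_nonneg (mul_nonneg he0 he0) (sq_nonneg (e - 2/3)),
      mul_nonneg he0 (sub_nonneg.2 he1)]
  have hr2 : r^2 ≤ 1 := by nlinarith
  have hr3 : r^3 ≤ 1 := by nlinarith
  have he2 : e^2 ≤ 1 := by nlinarith
  have he3 : e^3 ≤ 1 := by nlinarith
  have hT : 0 ≤ (179 + 160*e - 378*e^2 + 397*e^4)
        + r * (19 + 80*e - 330*e^2 + 244*e^3 + 25*e^4)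
        + r^2 * (1 - 14*e^2 + 15*e^4)
        + r^3 * (-2*e^3 + 2*e^4) := by
    nlinarith [mul_nonneg hr0 hc₂, mul_nonneg (sq_nonneg r) (pow_nonneg he0 4),
      mul_nonneg (pow_nonneg hr0 3) (pow_nonneg he0 4), mul_nonneg (sq_nonneg r) (sub_nonneg.2 he2),
      mul_nonneg (pow_nonneg hr0 3) (sub_nonneg.2 he3), sq_nonneg (e^2 - 1/2)]
  exact add_nonneg hc₀ (mul_nonneg hr0 hT)

theorem diagErr_add_diagErr_zero_eq {a u s t α : ℝ} (hα : 2 * (1 - a^2) * α = 1 + a^4/5)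
    (hs : s^2 = 1 - 2*a^2) (ht : t^2 = 1 - a^2) :
    800 * (1 - a^2)^2 * (diagErr a s t α u + diagErr a s t α 0)
      = a^4 * diagPoly (1 - 2*a^2) (1 - u^2)
        + 800 * (2 - a^2 + a^4/5) * u^2 * (1 - u^2)^2 * (1 - a^2 + (1 + a^4/5) * (1 - u^2))
          * (s * t - (1 - 3/2 * a^2 - (a^2)^2)) := by
  have hX : (1 - a^2) * ((1 + u^2) / 2 + α * (1 - u^2))
      = ((1 - a^2) * (1 + u^2) + (1 + a^4/5) * (1 - u^2)) / 2 := by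
    linear_combination (1 - u^2) / 2 * hα
  have hY : (1 - a^2) * (1 + 2 * α * (1 - u^2)) = 1 - a^2 + (1 + a^4/5) * (1 - u^2) := by
    linear_combination (1 - u^2) * hα
  have hγ : (1 - a^2) * (1 + 2 * α) = 2 - a^2 + a^4/5 := by
    linear_combination hα
  have hcleared : (1 - a^2)^2 * (diagErr a s t α u + diagErr a s t α 0)
      = 2 * a^2 * u^2 * ((1 - a^2) * ((1 + u^2) / 2 + α * (1 - u^2)))^2
        + (s * u^2 * ((1 - a^2) * (1 + 2 * α * (1 - u^2)))
          + (1 - a^2) * (1 + 2 * α) * t * (1 - u^2)^2 / 2)^2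
        + ((1 - a^2) * (1 + 2 * α) * t / 2)^2 - 2 * (1 - a^2)^2 := by
    unfold diagErr
    ring
  rw [mul_assoc, hcleared, hX, hY, hγ, diagPoly]
  linear_combination (800 * u^4 * (1 - a^2 + (1 + a^4/5) * (1 - u^2))^2) * hs
    + (800 * (2 - a^2 + a^4/5)^2 * ((1 - u^2)^4 / 4 + 1/4)) * ht

theorem diagErr_add_diagErr_zero_nonneg {a u s t α : ℝ} (ha : a^2 ≤ 1/2) (hu : u^2 ≤ 1)
    (hα : 2 * (1 - a^2) * α = 1 + a^4/5) (hs : s^2 = 1 - 2*a^2) (ht : t^2 = 1 - a^2)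
    (hst : 1 - 3/2 * a^2 - (a^2)^2 ≤ s * t) :
    0 ≤ diagErr a s t α u + diagErr a s t α 0 := by
  have hm : 0 < 800 * (1 - a^2)^2 := by
    have : 0 < 1 - a^2 := by linarith
    positivity
  refine nonneg_of_mul_nonneg_right ?_ hm
  rw [diagErr_add_diagErr_zero_eq hα hs ht]
  have hpoly : 0 ≤ diagPoly (1 - 2*a^2) (1 - u^2) :=
    diagPoly_nonneg (by linarith) (by linarith [sq_nonneg a]) (by linarith)
      (by linarith [sq_nonneg u])
  have hγ : 0 ≤ 2 - a^2 + a^4/5 := by linarith [pow_nonneg (sq_nonneg a) 2]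
  have hY : 0 ≤ 1 - a^2 + (1 + a^4/5) * (1 - u^2) :=
    add_nonneg (by linarith) (mul_nonneg (by positivity) (by linarith))
  have hcross := mul_nonneg (mul_nonneg (mul_nonneg (mul_nonneg
    (mul_nonneg (by norm_num : (0:ℝ) ≤ 800) hγ) (sq_nonneg u)) (sq_nonneg (1 - u^2))) hY)
    (sub_nonneg.2 hst)
  exact add_nonneg (mul_nonneg (by positivity) hpoly) hcross

/-- With `α_r = (1 + a⁴/5)/(2(1-a²))` one has
`f_d(u, α_r, β₀(α_r)) + f_d(0, α_r, β₀(α_r)) ≥ 0` for all `u ∈ [-1,1]`. -/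
theorem fd_alpha_r (a : ℝ) (ha : 0 < a) (ha' : a ≤ Real.sqrt 2 / 2) :
    ∀ u ∈ Set.Icc (-1:ℝ) 1,
      0 ≤ fd a ((1 + a^4/5) / (2*(1 - a^2))) (β₀ a ((1 + a^4/5) / (2*(1 - a^2)))) u +
          fd a ((1 + a^4/5) / (2*(1 - a^2))) (β₀ a ((1 + a^4/5) / (2*(1 - a^2)))) 0 := by
  intro u ⟨hu₁, hu₂⟩
  have ha2 : a^2 ≤ 1/2 :=
    calc a^2 ≤ (√2 / 2)^2 := pow_le_pow_left₀ ha.le ha' 2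
      _ = 1/2 := by rw [div_pow, Real.sq_sqrt zero_le_two]; norm_num
  have hu2 : u^2 ≤ 1 := by nlinarith
  have hα : 2 * (1 - a^2) * ((1 + a^4/5) / (2*(1 - a^2))) = 1 + a^4/5 :=
    mul_div_cancel₀ _ (by linarith : (0:ℝ) < 2 * (1 - a^2)).ne'
  rw [fd_β₀_eq, fd_β₀_eq]
  exact diagErr_add_diagErr_zero_nonneg ha2 hu2 hα (Real.sq_sqrt (by linarith))
    (Real.sq_sqrt (by linarith)) (le_sqrt_one_sub_two_mul_mul_sqrt_one_sub (sq_nonneg a) ha2)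

end
end

section
/- Let a = √3/3, α = 3/4 and β = 7√3/6 (the unique G¹ spline patch parameters). Then ‖p(0,0)‖ = 5√3/8, and for all (u,v) ∈ [−1,1]² one has 1 ≤ ‖p(u,v)‖ ≤ 5√3/8; consequently the radial error satisfies max_{(u,v)∈[−1,1]²} |‖p(u,v)‖ − 1| = (5√3 − 8)/8 and the whole patch lies outside the unit sphere. -/
noncomputable section

open Real Set

/-! With `a = √3/3` one has `√(1 - 2a²) = √3/3`, and the patch collapses to
`p(u,v) = (√3/24) (2u(5 - v²), 2v(5 - u²), 15 - 5u² - 5v² + 3u²v²)`, so that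
`192 ‖p(u,v)‖² = G(u², v²)` with `G = radialPoly` of bidegree `(2,2)`.
On `[0,1]²` one has `192 ≤ G ≤ 225 = G(0,0)`, and `225/192 = (5√3/8)²`. -/

lemma norm_v3_sq (x y z : ℝ) : ‖v3 x y z‖ ^ 2 = x ^ 2 + y ^ 2 + z ^ 2 := by
  rw [EuclideanSpace.norm_eq, Real.sq_sqrt (by positivity)]
  simp [v3, Fin.sum_univ_three]

lemma sqrt_one_sub_two_mul_sq_sqrt_three_div_three : √(1 - 2 * (√3 / 3) ^ 2) = √3 / 3 := by
  have hs : √3 ^ 2 = 3 := Real.sq_sqrt (by norm_num)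
  rw [show (1 : ℝ) - 2 * (√3 / 3) ^ 2 = (√3 / 3) ^ 2 by linear_combination (-1 / 3) * hs]
  exact Real.sqrt_sq (by positivity)

lemma bez_G1 (u v : ℝ) :
    bez (√3 / 3) (3 / 4) (7 * √3 / 6) u v =
      (√3 / 24) • v3 (2 * u * (5 - v ^ 2)) (2 * v * (5 - u ^ 2))
        (15 - 5 * u ^ 2 - 5 * v ^ 2 + 3 * u ^ 2 * v ^ 2) := by
  ext i
  fin_cases i <;>
    simp [bez, ctrl, bern, v3, sqrt_one_sub_two_mul_sq_sqrt_three_div_three, Fin.sum_univ_three] <;>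
    ring

def radialPoly (P Q : ℝ) : ℝ :=
  4 * P * (5 - Q) ^ 2 + 4 * Q * (5 - P) ^ 2 + (15 - 5 * P - 5 * Q + 3 * P * Q) ^ 2

lemma norm_sq_bez_G1 (u v : ℝ) :
    ‖bez (√3 / 3) (3 / 4) (7 * √3 / 6) u v‖ ^ 2 = radialPoly (u ^ 2) (v ^ 2) / 192 := by
  rw [bez_G1, norm_smul, mul_pow, norm_v3_sq, Real.norm_eq_abs, sq_abs, div_pow,
    Real.sq_sqrt (by norm_num), radialPoly]
  ring

-- Bernstein expansion on `[0,1]²`: all coefficients of `225 - radialPoly` are nonnegative.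
lemma radialPoly_le {P Q : ℝ} (hP : P ∈ Icc (0 : ℝ) 1) (hQ : Q ∈ Icc (0 : ℝ) 1) :
    radialPoly P Q ≤ 225 := by
  obtain ⟨hP₀, hP₁⟩ := hP
  obtain ⟨hQ₀, hQ₁⟩ := hQ
  have hP' : 0 ≤ 1 - P := sub_nonneg.2 hP₁
  have hQ' : 0 ≤ 1 - Q := sub_nonneg.2 hQ₁
  unfold radialPoly
  linarith [mul_nonneg (mul_nonneg hP₀ hP') (mul_nonneg hQ₀ hQ'),
    mul_nonneg (mul_nonneg hP₀ hP₀) (mul_nonneg hQ₀ hQ'),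
    mul_nonneg (mul_nonneg hP₀ hP') (mul_nonneg hQ₀ hQ₀),
    mul_nonneg (mul_nonneg hP₀ hP₀) (mul_nonneg hQ₀ hQ₀),
    mul_nonneg (mul_nonneg hP₀ hP') (mul_nonneg hQ' hQ'),
    mul_nonneg (mul_nonneg hP' hP') (mul_nonneg hQ₀ hQ'),
    mul_nonneg (mul_nonneg hP₀ hP₀) (mul_nonneg hQ' hQ'),
    mul_nonneg (mul_nonneg hP' hP') (mul_nonneg hQ₀ hQ₀)]

lemma le_radialPoly {P Q : ℝ} (hP : P ≤ 1) (hQ : Q ≤ 1) : 192 ≤ radialPoly P Q := by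
  have hP' : 0 ≤ 1 - P := sub_nonneg.2 hP
  have hQ' : 0 ≤ 1 - Q := sub_nonneg.2 hQ
  have key : radialPoly P Q - 192 =
      8 * (P - Q) ^ 2 + 8 * ((1 - P) * (1 - Q)) * (3 - P - Q) + 9 * ((1 - P) * (1 - Q)) ^ 2 := by
    unfold radialPoly; ring
  linarith [key, mul_nonneg (mul_nonneg hP' hQ') (by linarith : (0 : ℝ) ≤ 3 - P - Q),
    sq_nonneg (P - Q), sq_nonneg ((1 - P) * (1 - Q))]

lemma sSup_image_abs_sub_one_eq {X : Type*} {S : Set X} {g : X → ℝ} {x₀ : X} {M : ℝ}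
    (hx₀ : x₀ ∈ S) (hgx₀ : g x₀ = M) (hg : ∀ x ∈ S, 1 ≤ g x ∧ g x ≤ M) :
    sSup ((fun x => |g x - 1|) '' S) = M - 1 := by
  have habs : ∀ x ∈ S, |g x - 1| = g x - 1 := fun x hx => abs_of_nonneg (by linarith [hg x hx])
  refine IsGreatest.csSup_eq ⟨⟨x₀, hx₀, hgx₀ ▸ habs x₀ hx₀⟩, ?_⟩
  rintro _ ⟨x, hx, rfl⟩
  linarith [habs x hx, hg x hx]

lemma sq_five_mul_sqrt_three_div_eight : (5 * √3 / 8) ^ 2 = 225 / 192 := by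
  rw [div_pow, mul_pow, Real.sq_sqrt (by norm_num)]
  norm_num

lemma norm_bez_G1_zero_zero : ‖bez (√3 / 3) (3 / 4) (7 * √3 / 6) 0 0‖ = 5 * √3 / 8 := by
  rw [← sq_eq_sq₀ (norm_nonneg _) (by positivity), norm_sq_bez_G1, sq_five_mul_sqrt_three_div_eight,
    radialPoly]
  norm_num

lemma norm_bez_G1_mem_Icc {u v : ℝ} (hu : u ∈ Icc (-1 : ℝ) 1) (hv : v ∈ Icc (-1 : ℝ) 1) :
    ‖bez (√3 / 3) (3 / 4) (7 * √3 / 6) u v‖ ∈ Icc 1 (5 * √3 / 8) := by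
  have hsq : ∀ {w : ℝ}, w ∈ Icc (-1 : ℝ) 1 → w ^ 2 ∈ Icc (0 : ℝ) 1 := fun hw =>
    ⟨sq_nonneg _, sq_le_one_iff_abs_le_one _ |>.2 (abs_le.2 hw)⟩
  have hn := norm_nonneg (bez (√3 / 3) (3 / 4) (7 * √3 / 6) u v)
  constructor
  · rw [← one_le_sq_iff₀ hn, norm_sq_bez_G1]
    linarith [le_radialPoly (hsq hu).2 (hsq hv).2]
  · rw [← pow_le_pow_iff_left₀ hn (by positivity) two_ne_zero, norm_sq_bez_G1,
      sq_five_mul_sqrt_three_div_eight]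
    linarith [radialPoly_le (hsq hu) (hsq hv)]

/-- For the unique `G¹` spline patch parameters `a = √3/3`, `α = 3/4`, `β = 7√3/6`:
`‖p(0,0)‖ = 5√3/8`, for all `(u,v) ∈ [-1,1]²` one has `1 ≤ ‖p(u,v)‖ ≤ 5√3/8`, and
consequently the radial error is `max |‖p(u,v)‖ - 1| = (5√3 - 8)/8` (the whole patch
lies outside the unit sphere). -/
theorem G1_patch_radial_error (a α β : ℝ) (haa : a = Real.sqrt 3 / 3)
    (hαα : α = 3/4) (hββ : β = 7*Real.sqrt 3/6) :
    ‖bez a α β 0 0‖ = 5*Real.sqrt 3/8 ∧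
    (∀ u ∈ Set.Icc (-1:ℝ) 1, ∀ v ∈ Set.Icc (-1:ℝ) 1,
      1 ≤ ‖bez a α β u v‖ ∧ ‖bez a α β u v‖ ≤ 5*Real.sqrt 3/8) ∧
    sSup ((fun q : ℝ × ℝ => |‖bez a α β q.1 q.2‖ - 1|) ''
        (Set.Icc (-1:ℝ) 1 ×ˢ Set.Icc (-1:ℝ) 1)) = (5*Real.sqrt 3 - 8)/8 := by
  subst haa hαα hββ
  have hbounds : ∀ u ∈ Icc (-1 : ℝ) 1, ∀ v ∈ Icc (-1 : ℝ) 1,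
      1 ≤ ‖bez (√3 / 3) (3 / 4) (7 * √3 / 6) u v‖ ∧
        ‖bez (√3 / 3) (3 / 4) (7 * √3 / 6) u v‖ ≤ 5 * √3 / 8 :=
    fun u hu v hv => norm_bez_G1_mem_Icc hu hv
  refine ⟨norm_bez_G1_zero_zero, hbounds, ?_⟩
  rw [sSup_image_abs_sub_one_eq (x₀ := ((0 : ℝ), (0 : ℝ))) (by norm_num) norm_bez_G1_zero_zero
    fun q hq => hbounds q.1 hq.1 q.2 hq.2]
  ring

end
end
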